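/- Let N ≥ 1, q ∈ [1, ∞], and let f ∈ L^1(ℝ^N) satisfy ∫_{ℝ^N} f(x) dx = 0. Then lim_{t → ∞} t^{N(1 - 1/q)} ‖P_t * f‖_{L^q(ℝ^N)} = 0, where P_t * f denotes the convolution of f with the dilated Poisson kernel P_t. -/

import Mathlib

open MeasureTheory Real Filter ENNReal

/-- The normalizing constant of the Poisson kernel on `ℝ^N`. -/
noncomputable def cN (N : ℕ) : ℝ :=
  Real.Gamma (((N : ℝ) + 1) / 2) / Real.pi ^ (((N : ℝ) + 1) / 2)

/-- The Poisson kernel `P(x) = c_N (1 + ‖x‖²)^{-(N+1)/2}` on `ℝ^N`. -/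
noncomputable def P (N : ℕ) (x : EuclideanSpace ℝ (Fin N)) : ℝ :=
  cN N * (1 + ‖x‖ ^ 2) ^ (-(((N : ℝ) + 1) / 2))

/-- The dilated Poisson kernel `P_t(x) = t^{-N} P(x/t)`. -/
noncomputable def Pt (N : ℕ) (t : ℝ) (x : EuclideanSpace ℝ (Fin N)) : ℝ :=
  t ^ (-(N : ℝ)) * P N (t⁻¹ • x)

/-!
Since `∫ f = 0`, `(P_t * f)(x) = ∫ (P_t (x - y) - P_t x) f y dy`. With `M = sup |P|` and `L` a
Lipschitz constant of `P`, the kernel difference is at most `t^{-N} min (2M, L ‖y‖ / t)`, so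
`‖P_t * f‖_∞ ≤ t^{-N} A(t)` with `A(t) = ∫ min (2M, L ‖y‖ / t) |f y| dy`. By Tonelli and the
dilation invariance of the `L¹` norm, `‖P_t * f‖₁ ≤ B(t) = ∫ ‖P (· - y / t) - P‖₁ |f y| dy`.
Both tend to `0` by dominated convergence (for `B`, by continuity of translation in `L¹`), and
the interpolation inequality `‖g‖_q ≤ ‖g‖_∞^{1-1/q} ‖g‖₁^{1/q}` gives
`t^{N(1-1/q)} ‖P_t * f‖_q ≤ A(t)^{1-1/q} B(t)^{1/q} → 0`.
-/

open Topology NNReal Module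

section Interpolation
variable {α E : Type*} {m : MeasurableSpace α} {μ : Measure α} [NormedAddCommGroup E]

theorem eLpNorm_le_rpow_mul_eLpNorm_one_rpow {q : ℝ≥0∞} (hq : 1 ≤ q) {g : α → E} {C : ℝ≥0∞}
    (hC : C ≠ ∞) (hgC : ∀ᵐ x ∂μ, ‖g x‖ₑ ≤ C) :
    eLpNorm g q μ ≤ C ^ (1 - (1 / q).toReal) * eLpNorm g 1 μ ^ (1 / q).toReal := by
  rcases eq_or_ne q ∞ with rfl | hq_top
  · simpa using eLpNorm_le_of_ae_enorm_bound (p := ∞) hgC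
  have hq0 : q ≠ 0 := (zero_lt_one.trans_le hq).ne'
  set r := q.toReal
  have hr : 1 ≤ r := by simpa using ENNReal.toReal_mono hq_top hq
  have hpt : ∀ᵐ x ∂μ, ‖g x‖ₑ ^ r ≤ C ^ (r - 1) * ‖g x‖ₑ := by
    filter_upwards [hgC] with x hx
    calc ‖g x‖ₑ ^ r = ‖g x‖ₑ ^ (r - 1) * ‖g x‖ₑ ^ (1 : ℝ) := by
          rw [← ENNReal.rpow_add_of_nonneg _ _ (by linarith) zero_le_one, sub_add_cancel]
      _ ≤ C ^ (r - 1) * ‖g x‖ₑ := by rw [ENNReal.rpow_one]; gcongr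
  have hCr : C ^ (1 - 1 / r) = (C ^ (r - 1)) ^ (1 / r) := by
    rw [← ENNReal.rpow_mul]; congr 1; field_simp
  rw [eLpNorm_eq_lintegral_rpow_enorm_toReal hq0 hq_top, eLpNorm_one_eq_lintegral_enorm,
    ENNReal.toReal_div, ENNReal.toReal_one, hCr, ← ENNReal.mul_rpow_of_nonneg _ _ (by positivity),
    ← lintegral_const_mul' _ _ (ENNReal.rpow_ne_top_of_nonneg (by linarith) hC)]
  gcongr ?_ ^ _
  exact lintegral_mono_ae hpt

end Interpolation

theorem ENNReal.toReal_one_div_le_one {q : ℝ≥0∞} (hq : 1 ≤ q) : (1 / q).toReal ≤ 1 :=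
  ENNReal.toReal_le_of_le_ofReal zero_le_one (by simpa using hq)

theorem ENNReal.tendsto_rpow_mul_rpow_of_tendsto_zero {ι : Type*} {l : Filter ι}
    {a b : ι → ℝ≥0∞} (ha : Tendsto a l (𝓝 0)) (hb : Tendsto b l (𝓝 0)) {θ : ℝ}
    (hθ₀ : 0 ≤ θ) (hθ₁ : θ ≤ 1) :
    Tendsto (fun i => a i ^ (1 - θ) * b i ^ θ) l (𝓝 0) := by
  rcases hθ₁.lt_or_eq with hθ | rfl
  · have ha' : Tendsto (fun i => a i ^ (1 - θ)) l (𝓝 0) := by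
      simpa [ENNReal.zero_rpow_of_pos (sub_pos.2 hθ)] using ha.ennrpow_const (1 - θ)
    simpa using ENNReal.Tendsto.mul ha' (Or.inr (ENNReal.rpow_ne_top_of_nonneg hθ₀ zero_ne_top))
      (hb.ennrpow_const θ) (Or.inr zero_ne_top)
  · simpa using hb

section Integrals
variable {α β : Type*} {m : MeasurableSpace α} {μ : Measure α}

theorem integral_mul_eq_integral_sub_const_mul {f k : α → ℝ} (hf : Integrable f μ)
    (hkf : Integrable (fun y => k y * f y) μ) (hmean : ∫ y, f y ∂μ = 0) (c : ℝ) :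
    ∫ y, k y * f y ∂μ = ∫ y, (k y - c) * f y ∂μ := by
  simp_rw [sub_mul]
  rw [integral_sub hkf (hf.const_mul c), integral_const_mul, hmean, mul_zero, sub_zero]

theorem lintegral_enorm_integral_mul_le [MeasurableSpace β] {ν : Measure β} [SFinite μ]
    [SFinite ν] {k : α → β → ℝ} {f : β → ℝ} (hk : AEMeasurable (Function.uncurry k) (μ.prod ν))
    (hf : AEMeasurable f ν) :
    ∫⁻ x, ‖∫ y, k x y * f y ∂ν‖ₑ ∂μ ≤ ∫⁻ y, (∫⁻ x, ‖k x y‖ₑ ∂μ) * ‖f y‖ₑ ∂ν :=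
  calc ∫⁻ x, ‖∫ y, k x y * f y ∂ν‖ₑ ∂μ ≤ ∫⁻ x, ∫⁻ y, ‖k x y‖ₑ * ‖f y‖ₑ ∂ν ∂μ := by
        gcongr with x
        simpa only [enorm_mul] using enorm_integral_le_lintegral_enorm (fun y => k x y * f y)
    _ = ∫⁻ y, ∫⁻ x, ‖k x y‖ₑ * ‖f y‖ₑ ∂μ ∂ν :=
        lintegral_lintegral_swap (hk.enorm.mul hf.comp_snd.enorm)
    _ = ∫⁻ y, (∫⁻ x, ‖k x y‖ₑ ∂μ) * ‖f y‖ₑ ∂ν := by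
        simp_rw [lintegral_mul_const' _ _ enorm_ne_top]

end Integrals

section Translation
variable {G E : Type*} [NormedAddCommGroup G] [MeasurableSpace G] [BorelSpace G]
  [NormedAddCommGroup E] {μ : Measure G} [μ.IsAddRightInvariant] {p : ℝ≥0∞}

theorem eLpNorm_comp_sub_sub_le {K : G → E} (hK : AEStronglyMeasurable K μ) (hp : 1 ≤ p) (z : G) :
    eLpNorm (fun u => K (u - z) - K u) p μ ≤ 2 * eLpNorm K p μ := by
  have hτ : MeasurePreserving (· - z) μ μ := measurePreserving_sub_right μ z
  calc eLpNorm (fun u => K (u - z) - K u) p μ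
      ≤ eLpNorm (fun u => K (u - z)) p μ + eLpNorm K p μ :=
        eLpNorm_sub_le (hK.comp_measurePreserving hτ) hK hp
    _ = 2 * eLpNorm K p μ := by rw [two_mul, ← eLpNorm_comp_measurePreserving hK hτ]; rfl

variable [IsLocallyFiniteMeasure μ] [μ.InnerRegularCompactLTTop] [Fact (1 ≤ p)]

theorem continuous_eLpNorm_comp_sub_sub {K : G → E} (hK : MemLp K p μ) (hp : p ≠ ∞) :
    Continuous fun z => eLpNorm (fun u => K (u - z) - K u) p μ := by
  let τ : C(G, C(G, G)) := ContinuousMap.curry ⟨fun v : G × G => v.2 - v.1, by fun_prop⟩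
  have hτ (z : G) : MeasurePreserving (τ z) μ μ := measurePreserving_sub_right μ z
  have hcont : Continuous fun z => Lp.compMeasurePreserving (τ z) (hτ z) (hK.toLp K) :=
    continuous_const.compMeasurePreservingLp τ.continuous hτ hp
  refine ((hcont.sub (continuous_const (y := hK.toLp K))).enorm).congr fun z => ?_
  rw [Lp.enorm_def]
  apply eLpNorm_congr_ae
  filter_upwards [Lp.coeFn_sub (Lp.compMeasurePreserving (τ z) (hτ z) (hK.toLp K)) (hK.toLp K),
    Lp.coeFn_compMeasurePreserving (hK.toLp K) (hτ z),
    (hτ z).quasiMeasurePreserving.ae_eq_comp hK.coeFn_toLp, hK.coeFn_toLp] with u h1 h2 h3 h4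
  rw [Pi.sub_apply, h1, Pi.sub_apply, h2, h3, h4]
  rfl

end Translation

noncomputable section Dilation
variable {E : Type*} [NormedAddCommGroup E]

theorem abs_sub_le_min_of_lipschitzWith {K : E → ℝ} {M : ℝ} {L : ℝ≥0} (hKM : ∀ x, |K x| ≤ M)
    (hKL : LipschitzWith L K) (u z : E) : |K (u - z) - K u| ≤ min (2 * M) (L * ‖z‖) := by
  refine le_min ?_ ?_
  · linarith [abs_sub (K (u - z)) (K u), hKM (u - z), hKM u]
  · have := hKL.dist_le_mul (u - z) u
    rwa [Real.dist_eq, dist_eq_norm, sub_sub_cancel_left, norm_neg] at this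

variable [NormedSpace ℝ E]

def dilate (K : E → ℝ) (t : ℝ) (x : E) : ℝ := t ^ (-(finrank ℝ E : ℝ)) * K (t⁻¹ • x)

theorem dilate_comp_sub_sub (K : E → ℝ) (t : ℝ) (x y : E) :
    dilate K t (x - y) - dilate K t x = dilate (fun u => K (u - t⁻¹ • y) - K u) t x := by
  simp only [dilate, smul_sub, mul_sub]

theorem continuous_dilate {K : E → ℝ} (hK : Continuous K) (t : ℝ) : Continuous (dilate K t) := by
  unfold dilate; fun_prop

theorem abs_dilate_le {K : E → ℝ} {M : ℝ} (hKM : ∀ x, |K x| ≤ M) (t : ℝ) (x : E) :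
    |dilate K t x| ≤ |t ^ (-(finrank ℝ E : ℝ))| * M := by
  rw [dilate, abs_mul]; gcongr; exact hKM _

variable [MeasurableSpace E] [BorelSpace E] {μ : Measure E} {K : E → ℝ} {M : ℝ} {f : E → ℝ}

theorem integrable_dilate_comp_sub_mul (hK : Continuous K) (hKM : ∀ x, |K x| ≤ M)
    (hf : Integrable f μ) (t : ℝ) (x : E) :
    Integrable (fun y => dilate K t (x - y) * f y) μ :=
  hf.bdd_mul ((continuous_dilate hK t).comp (continuous_sub_left x)).aestronglyMeasurable
    (.of_forall fun y => abs_dilate_le hKM t (x - y))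

theorem integral_dilate_comp_sub_mul_eq (hK : Continuous K) (hKM : ∀ x, |K x| ≤ M)
    (hf : Integrable f μ) (hmean : ∫ y, f y ∂μ = 0) (t : ℝ) (x : E) :
    ∫ y, dilate K t (x - y) * f y ∂μ = ∫ y, (dilate K t (x - y) - dilate K t x) * f y ∂μ :=
  integral_mul_eq_integral_sub_const_mul hf (integrable_dilate_comp_sub_mul hK hKM hf t x) hmean _

theorem enorm_integral_dilate_comp_sub_mul_le {L : ℝ≥0} (hKM : ∀ x, |K x| ≤ M)
    (hKL : LipschitzWith L K) (hf : Integrable f μ) (hmean : ∫ y, f y ∂μ = 0) (t : ℝ) (x : E) :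
    ‖∫ y, dilate K t (x - y) * f y ∂μ‖ₑ ≤ ‖t ^ (-(finrank ℝ E : ℝ))‖ₑ *
      ∫⁻ y, ENNReal.ofReal (min (2 * M) (L * ‖t⁻¹ • y‖)) * ‖f y‖ₑ ∂μ := by
  rw [integral_dilate_comp_sub_mul_eq hKL.continuous hKM hf hmean,
    ← lintegral_const_mul' _ _ enorm_ne_top]
  refine (enorm_integral_le_lintegral_enorm _).trans (lintegral_mono fun y => ?_)
  rw [enorm_mul, dilate_comp_sub_sub, dilate, enorm_mul, ← mul_assoc]
  gcongr
  rw [Real.enorm_eq_ofReal_abs]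
  exact ENNReal.ofReal_le_ofReal (abs_sub_le_min_of_lipschitzWith hKM hKL _ _)

theorem tendsto_lintegral_comp_inv_smul_mul_enorm {ω : E → ℝ≥0∞} (hω : Continuous ω)
    (hω₀ : ω 0 = 0) {C : ℝ≥0∞} (hC : C ≠ ∞) (hωC : ∀ z, ω z ≤ C) (hf : Integrable f μ) :
    Tendsto (fun t : ℝ => ∫⁻ y, ω (t⁻¹ • y) * ‖f y‖ₑ ∂μ) atTop (𝓝 0) := by
  have hlim (y : E) : Tendsto (fun t : ℝ => ω (t⁻¹ • y) * ‖f y‖ₑ) atTop (𝓝 0) := by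
    have h : Tendsto (fun t : ℝ => t⁻¹ • y) atTop (𝓝 0) := by
      simpa using (tendsto_inv_atTop_zero (𝕜 := ℝ)).smul_const y
    have := (hω.tendsto 0).comp h
    simpa [hω₀] using ENNReal.Tendsto.mul_const this (Or.inr enorm_ne_top)
  simpa using tendsto_lintegral_filter_of_dominated_convergence' (fun y => C * ‖f y‖ₑ)
    (.of_forall fun t => ((hω.comp (continuous_const_smul t⁻¹)).measurable.aemeasurable.mul
      hf.aemeasurable.enorm))
    (.of_forall fun t => .of_forall fun y => mul_le_mul_left (hωC _) _)
    (by rw [lintegral_const_mul' _ _ hC]; exact mul_ne_top hC hf.2.ne) (.of_forall hlim)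

variable [FiniteDimensional ℝ E] [μ.IsAddHaarMeasure]

theorem lintegral_comp_inv_smul (F : E → ℝ≥0∞) {t : ℝ} (ht : 0 < t) :
    ∫⁻ x, F (t⁻¹ • x) ∂μ = ENNReal.ofReal (t ^ finrank ℝ E) * ∫⁻ x, F x ∂μ := by
  let e : E ≃ᵐ E := (Homeomorph.smul (Units.mk0 t⁻¹ (inv_ne_zero ht.ne'))).toMeasurableEquiv
  calc ∫⁻ x, F (t⁻¹ • x) ∂μ = ∫⁻ x, F x ∂(Measure.map e μ) := (lintegral_map_equiv F e).symm
    _ = _ := by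
      rw [show ⇑e = (t⁻¹ • ·) from rfl, Measure.map_addHaar_smul μ (inv_ne_zero ht.ne'),
        lintegral_smul_measure, inv_pow, inv_inv, abs_of_pos (by positivity), smul_eq_mul]

theorem eLpNorm_one_dilate (K : E → ℝ) {t : ℝ} (ht : 0 < t) :
    eLpNorm (dilate K t) 1 μ = eLpNorm K 1 μ := by
  simp only [eLpNorm_one_eq_lintegral_enorm, dilate, enorm_mul]
  rw [lintegral_const_mul' _ _ enorm_ne_top, lintegral_comp_inv_smul (‖K ·‖ₑ) ht, ← mul_assoc]
  convert one_mul _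
  rw [Real.enorm_eq_ofReal (by positivity), ← ENNReal.ofReal_mul (by positivity),
    Real.rpow_neg ht.le, Real.rpow_natCast, inv_mul_cancel₀ (by positivity), ENNReal.ofReal_one]

theorem eLpNorm_one_integral_dilate_comp_sub_mul_le (hK : Continuous K) (hKM : ∀ x, |K x| ≤ M)
    (hf : Integrable f μ) (hmean : ∫ y, f y ∂μ = 0) {t : ℝ} (ht : 0 < t) :
    eLpNorm (fun x => ∫ y, dilate K t (x - y) * f y ∂μ) 1 μ ≤
      ∫⁻ y, eLpNorm (fun u => K (u - t⁻¹ • y) - K u) 1 μ * ‖f y‖ₑ ∂μ := by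
  simp_rw [eLpNorm_one_eq_lintegral_enorm, integral_dilate_comp_sub_mul_eq hK hKM hf hmean]
  refine (lintegral_enorm_integral_mul_le ?_ hf.aemeasurable).trans_eq ?_
  · exact ((continuous_dilate hK t).comp continuous_sub |>.sub
      ((continuous_dilate hK t).comp continuous_fst)).aemeasurable
  · simp_rw [dilate_comp_sub_sub, ← eLpNorm_one_eq_lintegral_enorm, eLpNorm_one_dilate _ ht]

end Dilation

section Decay
variable {E : Type*} [NormedAddCommGroup E] [NormedSpace ℝ E] [FiniteDimensional ℝ E]
  [MeasurableSpace E] [BorelSpace E] {μ : Measure E} [μ.IsAddHaarMeasure]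
  {K : E → ℝ} {M : ℝ} {L : ℝ≥0} {f : E → ℝ} {q : ℝ≥0∞}

theorem rpow_mul_eLpNorm_integral_dilate_comp_sub_mul_le (hKM : ∀ x, |K x| ≤ M)
    (hKL : LipschitzWith L K) (hf : Integrable f μ) (hmean : ∫ x, f x ∂μ = 0) (hq : 1 ≤ q)
    {t : ℝ} (ht : 0 < t) :
    ENNReal.ofReal (t ^ ((finrank ℝ E : ℝ) * (1 - (1 / q).toReal))) *
        eLpNorm (fun x => ∫ y, dilate K t (x - y) * f y ∂μ) q μ ≤
      (∫⁻ y, ENNReal.ofReal (min (2 * M) (L * ‖t⁻¹ • y‖)) * ‖f y‖ₑ ∂μ) ^ (1 - (1 / q).toReal) *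
      (∫⁻ y, eLpNorm (fun u => K (u - t⁻¹ • y) - K u) 1 μ * ‖f y‖ₑ ∂μ) ^ (1 / q).toReal := by
  set d : ℝ := ((finrank ℝ E : ℕ) : ℝ)
  set θ := (1 / q).toReal
  have hθ₁ : θ ≤ 1 := ENNReal.toReal_one_div_le_one hq
  have hA : ∫⁻ y, ENNReal.ofReal (min (2 * M) (L * ‖t⁻¹ • y‖)) * ‖f y‖ₑ ∂μ ≠ ∞ := by
    refine ne_top_of_le_ne_top (mul_ne_top (ofReal_ne_top (r := 2 * M)) hf.2.ne) ?_
    rw [← lintegral_const_mul' _ _ ofReal_ne_top]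
    exact lintegral_mono fun y => by gcongr; exact min_le_left _ _
  have hscale : ENNReal.ofReal (t ^ (d * (1 - θ))) * ‖t ^ (-d)‖ₑ ^ (1 - θ) = 1 := by
    rw [Real.enorm_eq_ofReal (by positivity), ENNReal.ofReal_rpow_of_nonneg (by positivity)
      (by linarith), ← ENNReal.ofReal_mul (by positivity), ← Real.rpow_mul ht.le,
      ← Real.rpow_add ht, neg_mul, add_neg_cancel, Real.rpow_zero, ENNReal.ofReal_one]
  grw [eLpNorm_le_rpow_mul_eLpNorm_one_rpow hq (mul_ne_top enorm_ne_top hA)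
      (.of_forall (enorm_integral_dilate_comp_sub_mul_le hKM hKL hf hmean t)),
    eLpNorm_one_integral_dilate_comp_sub_mul_le hKL.continuous hKM hf hmean ht,
    ENNReal.mul_rpow_of_nonneg _ _ (by linarith), ← mul_assoc, ← mul_assoc, hscale, one_mul]

theorem tendsto_rpow_mul_eLpNorm_integral_dilate_comp_sub_mul (hK : Integrable K μ)
    (hKM : ∀ x, |K x| ≤ M) (hKL : LipschitzWith L K) (hf : Integrable f μ)
    (hmean : ∫ x, f x ∂μ = 0) (hq : 1 ≤ q) :
    Tendsto (fun t : ℝ => ENNReal.ofReal (t ^ ((finrank ℝ E : ℝ) * (1 - (1 / q).toReal))) *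
        eLpNorm (fun x => ∫ y, dilate K t (x - y) * f y ∂μ) q μ) atTop (𝓝 0) := by
  have hM : 0 ≤ M := (abs_nonneg _).trans (hKM 0)
  have hK₁ : MemLp K 1 μ := memLp_one_iff_integrable.2 hK
  have hA := tendsto_lintegral_comp_inv_smul_mul_enorm
    (ω := fun z => ENNReal.ofReal (min (2 * M) (L * ‖z‖)))
    (ENNReal.continuous_ofReal.comp (by fun_prop)) (by simp [hM]) ofReal_ne_top
    (fun z => ENNReal.ofReal_le_ofReal (min_le_left _ _)) hf
  have hB := tendsto_lintegral_comp_inv_smul_mul_enorm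
    (ω := fun z => eLpNorm (fun u => K (u - z) - K u) 1 μ)
    (continuous_eLpNorm_comp_sub_sub hK₁ one_ne_top) (by simp)
    (mul_ne_top ofNat_ne_top hK₁.eLpNorm_ne_top) (eLpNorm_comp_sub_sub_le hK.1 le_rfl) hf
  refine tendsto_of_tendsto_of_tendsto_of_le_of_le' tendsto_const_nhds
    (ENNReal.tendsto_rpow_mul_rpow_of_tendsto_zero hA hB ENNReal.toReal_nonneg
      (ENNReal.toReal_one_div_le_one hq))
    (.of_forall fun _ => zero_le) ?_
  filter_upwards [eventually_gt_atTop 0] with t ht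
  exact rpow_mul_eLpNorm_integral_dilate_comp_sub_mul_le hKM hKL hf hmean hq ht

end Decay

theorem lipschitzWith_one_add_sq_rpow_neg {s : ℝ} (hs : 0 ≤ s) :
    LipschitzWith s.toNNReal fun r : ℝ => (1 + r ^ 2) ^ (-s) := by
  have hderiv (r : ℝ) : HasDerivAt (fun r : ℝ => (1 + r ^ 2) ^ (-s))
      (-s * (2 * r) * (1 + r ^ 2) ^ (-s - 1)) r := by
    have := ((hasDerivAt_pow 2 r).const_add 1).rpow_const (p := -s) (Or.inl (by positivity))
    convert this using 1; ring
  refine lipschitzWith_of_nnnorm_deriv_le (fun r => (hderiv r).differentiableAt) fun r => ?_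
  rw [(hderiv r).deriv, ← NNReal.coe_le_coe, coe_nnnorm, Real.coe_toNNReal _ hs, Real.norm_eq_abs]
  have h1 : 0 < 1 + r ^ 2 := by positivity
  have h2 : |2 * r| ≤ 1 + r ^ 2 := by
    rw [abs_le]; constructor <;> nlinarith [sq_nonneg (r + 1), sq_nonneg (r - 1)]
  calc |-s * (2 * r) * (1 + r ^ 2) ^ (-s - 1)|
      = s * |2 * r| * (1 + r ^ 2) ^ (-s - 1) := by
        rw [abs_mul, abs_mul, abs_neg, abs_of_nonneg hs, abs_of_pos (Real.rpow_pos_of_pos h1 _)]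
    _ ≤ s * (1 + r ^ 2) * (1 + r ^ 2) ^ (-s - 1) := by gcongr
    _ = s * ((1 + r ^ 2) ^ (1 : ℝ) * (1 + r ^ 2) ^ (-s - 1)) := by rw [Real.rpow_one]; ring
    _ = s * (1 + r ^ 2) ^ (-s) := by rw [← Real.rpow_add h1]; ring_nf
    _ ≤ s := mul_le_of_le_one_right hs
        (Real.rpow_le_one_of_one_le_of_nonpos (by linarith [sq_nonneg r]) (by linarith))

section Poisson
variable (N : ℕ)

theorem cN_pos : 0 < cN N :=
  div_pos (Real.Gamma_pos_of_pos (by positivity)) (Real.rpow_pos_of_pos Real.pi_pos _)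

theorem abs_P_le (x : EuclideanSpace ℝ (Fin N)) : |P N x| ≤ cN N := by
  rw [P, abs_mul, abs_of_pos (cN_pos N), abs_of_pos (Real.rpow_pos_of_pos (by positivity) _)]
  exact mul_le_of_le_one_right (cN_pos N).le
    (Real.rpow_le_one_of_one_le_of_nonpos (by nlinarith [sq_nonneg ‖x‖])
      (neg_nonpos.2 (by positivity)))

theorem lipschitzWith_P : LipschitzWith (‖cN N‖₊ * (((N : ℝ) + 1) / 2).toNNReal) (P N) := by
  have h := (lipschitzWith_smul (cN N)).comp
    ((lipschitzWith_one_add_sq_rpow_neg (s := ((N : ℝ) + 1) / 2) (by positivity)).comp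
      (lipschitzWith_one_norm (E := EuclideanSpace ℝ (Fin N))))
  rw [mul_one] at h
  exact h

theorem integrable_P : Integrable (P N) := by
  have hdim : (finrank ℝ (EuclideanSpace ℝ (Fin N)) : ℝ) < (N : ℝ) + 1 := by
    rw [finrank_euclideanSpace_fin]; linarith
  refine ((integrable_rpow_neg_one_add_norm_sq hdim).const_mul (cN N)).congr
    (.of_forall fun x => ?_)
  simp only [P, neg_div]

theorem Pt_eq_dilate : Pt N = dilate (P N) := by
  ext t x
  simp [Pt, dilate]

end Poisson

theorem stmt_8_general (N : ℕ) (q : ℝ≥0∞) (hq : 1 ≤ q)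
    (f : EuclideanSpace ℝ (Fin N) → ℝ)
    (hf : Integrable f volume) (hmean : (∫ x, f x) = 0) :
    Tendsto (fun t : ℝ => ENNReal.ofReal (t ^ ((N : ℝ) * (1 - (1 / q).toReal)))
        * eLpNorm (fun x => ∫ y, Pt N t (x - y) * f y) q volume)
      atTop (nhds 0) := by
  simpa [Pt_eq_dilate, finrank_euclideanSpace_fin] using
    tendsto_rpow_mul_eLpNorm_integral_dilate_comp_sub_mul (integrable_P N) (abs_P_le N)
      (lipschitzWith_P N) hf hmean hq

theorem stmt_8 (N : ℕ) (hN : 1 ≤ N) (q : ℝ≥0∞) (hq : 1 ≤ q)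
    (f : EuclideanSpace ℝ (Fin N) → ℝ)
    (hf : Integrable f volume) (hmean : (∫ x, f x) = 0) :
    Tendsto (fun t : ℝ => ENNReal.ofReal (t ^ ((N : ℝ) * (1 - (1 / q).toReal)))
        * eLpNorm (fun x => ∫ y, Pt N t (x - y) * f y) q volume)
      atTop (nhds 0) :=
  stmt_8_general N q hq f hf hmean
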